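/- The five diagonal matrix H is the conjugate of (J_{[2]} − cI)² by T; entrywise: for all n, m ≥ 0, Σ_k T(n,k)·((J_{[2]} − cI)²)(k,m) = Σ_k H(n,k)·T(k,m), where ((J_{[2]} − cI)²)(k,m) = Σ_j (J_{[2]}(k,j) − c·δ_{kj})·(J_{[2]}(j,m) − c·δ_{jm}), and all sums have only finitely many nonzero terms because J_{[2]} is tridiagonal, H is five-diagonal, and T is lower triangular with bandwidth 2. -/

import Mathlib

open MeasureTheory Polynomial

/-- Squared norm `‖Q‖_μ² = ∫ Q(x)² dμ`. -/
noncomputable def nrmSq (μ : Measure ℝ) (Q : Polynomial ℝ) : ℝ := ∫ x, Q.eval x ^ 2 ∂μ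

/-- Squared norm in the 2-iterated Christoffel measure `(x-c)² dμ`. -/
noncomputable def nrmSq2 (μ : Measure ℝ) (c : ℝ) (Q : Polynomial ℝ) : ℝ :=
  ∫ x, Q.eval x ^ 2 * (x - c) ^ 2 ∂μ

/-- Sobolev-type inner product `⟨f,g⟩_S = ∫ f g dμ + M f(c) g(c) + N f'(c) g'(c)`. -/
noncomputable def ipS (μ : Measure ℝ) (c M N : ℝ) (f g : Polynomial ℝ) : ℝ :=
  (∫ x, f.eval x * g.eval x ∂μ) + M * (f.eval c * g.eval c)
    + N * ((derivative f).eval c * (derivative g).eval c)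

/-- Leading coefficient `r_n = 1/‖P_n‖_μ` of the orthonormal polynomial `p_n`. -/
noncomputable def rC (μ : Measure ℝ) (P : ℕ → Polynomial ℝ) (n : ℕ) : ℝ :=
  1 / Real.sqrt (nrmSq μ (P n))

/-- Leading coefficient `r_n^{[2]} = 1/‖P_n^{[2]}‖_{[2]}`. -/
noncomputable def r2C (μ : Measure ℝ) (c : ℝ) (P2 : ℕ → Polynomial ℝ) (n : ℕ) : ℝ :=
  1 / Real.sqrt (nrmSq2 μ c (P2 n))

/-- Orthonormal polynomial `p_n = P_n/‖P_n‖_μ`. -/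
noncomputable def onP (μ : Measure ℝ) (P : ℕ → Polynomial ℝ) (n : ℕ) : Polynomial ℝ :=
  C (rC μ P n) * P n

/-- Orthonormal polynomial `p_n^{[2]} = P_n^{[2]}/‖P_n^{[2]}‖_{[2]}`. -/
noncomputable def onP2 (μ : Measure ℝ) (c : ℝ) (P2 : ℕ → Polynomial ℝ) (n : ℕ) : Polynomial ℝ :=
  C (r2C μ c P2 n) * P2 n

/-- Leading coefficient `t_n = 1/‖S_n^{M,N}‖_S` of the Sobolev-type orthonormal polynomial. -/
noncomputable def tC (μ : Measure ℝ) (c M N : ℝ) (S : ℕ → Polynomial ℝ) (n : ℕ) : ℝ :=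
  1 / Real.sqrt (ipS μ c M N (S n) (S n))

/-- Sobolev-type orthonormal polynomial `s_n^{M,N} = S_n^{M,N}/‖S_n^{M,N}‖_S`. -/
noncomputable def sN (μ : Measure ℝ) (c M N : ℝ) (S : ℕ → Polynomial ℝ) (n : ℕ) : Polynomial ℝ :=
  C (tC μ c M N S n) * S n

/-- Diagonal kernel value `K_n(c,c) = Σ_{j=0}^n P_j(c)²/‖P_j‖_μ²`. -/
noncomputable def Kcc (μ : Measure ℝ) (P : ℕ → Polynomial ℝ) (c : ℝ) (n : ℕ) : ℝ :=
  ∑ j ∈ Finset.range (n + 1), (P j).eval c ^ 2 / nrmSq μ (P j)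

/-- Kernel `K_n^{(0,j)}(x,c)` as a polynomial in `x`:
`Σ_{k=0}^n (d/dy)^j P_k(y)|_{y=c} · P_k(x)/‖P_k‖_μ²`. -/
noncomputable def Kpoly (μ : Measure ℝ) (P : ℕ → Polynomial ℝ) (c : ℝ) (n j : ℕ) : Polynomial ℝ :=
  ∑ k ∈ Finset.range (n + 1), C ((derivative^[j] (P k)).eval c / nrmSq μ (P k)) * P k

/-- Mixed derivative of the kernel at the diagonal:
`K_n^{(i,j)}(c,c) = Σ_{k=0}^n P_k^{(i)}(c) P_k^{(j)}(c)/‖P_k‖_μ²`. -/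
noncomputable def Kder (μ : Measure ℝ) (P : ℕ → Polynomial ℝ) (c : ℝ) (n i j : ℕ) : ℝ :=
  ∑ k ∈ Finset.range (n + 1),
    (derivative^[i] (P k)).eval c * (derivative^[j] (P k)).eval c / nrmSq μ (P k)

/-- Connection coefficient `d_n`. -/
noncomputable def dCoef (P : ℕ → Polynomial ℝ) (c : ℝ) (n : ℕ) : ℝ :=
  ((P (n + 2)).eval c * (derivative (P n)).eval c
      - (derivative (P (n + 2))).eval c * (P n).eval c) /
    ((P (n + 1)).eval c * (derivative (P n)).eval c
      - (derivative (P (n + 1))).eval c * (P n).eval c)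

/-- Connection coefficient `e_n`. -/
noncomputable def eCoef (P : ℕ → Polynomial ℝ) (c : ℝ) (n : ℕ) : ℝ :=
  ((P (n + 2)).eval c * (derivative (P (n + 1))).eval c
      - (derivative (P (n + 2))).eval c * (P (n + 1)).eval c) /
    ((P (n + 1)).eval c * (derivative (P n)).eval c
      - (derivative (P (n + 1))).eval c * (P n).eval c)

/-- Connection coefficient `γ_{j,n} = ⟨s_n^{M,N}, p_j^{[2]}⟩_{[2]}`. -/
noncomputable def gamC (μ : Measure ℝ) (c M N : ℝ) (S P2 : ℕ → Polynomial ℝ) (j n : ℕ) : ℝ :=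
  ∫ x, (sN μ c M N S n).eval x * (onP2 μ c P2 j).eval x * (x - c) ^ 2 ∂μ

/-- Jacobi matrix of `μ`: `J(n,m) = ∫ x p_n(x) p_m(x) dμ`. -/
noncomputable def Jmat (μ : Measure ℝ) (P : ℕ → Polynomial ℝ) (n m : ℕ) : ℝ :=
  ∫ x, x * ((onP μ P n).eval x * (onP μ P m).eval x) ∂μ

/-- Jacobi matrix of `(x-c)² dμ`: `J_{[2]}(n,m) = ∫ x p_n^{[2]}(x) p_m^{[2]}(x) (x-c)² dμ`. -/
noncomputable def J2mat (μ : Measure ℝ) (c : ℝ) (P2 : ℕ → Polynomial ℝ) (n m : ℕ) : ℝ :=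
  ∫ x, x * ((onP2 μ c P2 n).eval x * (onP2 μ c P2 m).eval x) * (x - c) ^ 2 ∂μ

/-- Five-diagonal matrix `H(n,m) = ⟨(x-c)² s_n^{M,N}, s_m^{M,N}⟩_S`. -/
noncomputable def Hmat (μ : Measure ℝ) (c M N : ℝ) (S : ℕ → Polynomial ℝ) (n m : ℕ) : ℝ :=
  ipS μ c M N ((X - C c) ^ 2 * sN μ c M N S n) (sN μ c M N S m)

/-- Kronecker delta. -/
noncomputable def kdel (n m : ℕ) : ℝ := if n = m then 1 else 0

/-- Lower triangular connection matrix `T(n,m) = ⟨s_n^{M,N}, p_m^{[2]}⟩_{[2]}`. -/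
noncomputable def Tmat (μ : Measure ℝ) (c M N : ℝ) (S P2 : ℕ → Polynomial ℝ) (n m : ℕ) : ℝ :=
  gamC μ c M N S P2 m n

/-!
Expand in the orthonormal bases `p_k^{[2]}` and `s_k^{M,N}` and apply Parseval's identity for
each inner product. Since `(x - c)² g` has a double zero at `c`, the point-mass terms of
`⟨f, (x - c)² g⟩_S` vanish, so `⟨f, (x - c)² g⟩_S = ⟨f, g⟩_{[2]}` and multiplication by
`(x - c)²` is symmetric for `⟨·,·⟩_S`. Hence both `T (J_{[2]} - cI)²` and `H T` have `(n, m)` entry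
`⟨s_n, (x - c)² p_m^{[2]}⟩_{[2]}`. The band structure of the three matrices is the degree count
`⟨f, p_n⟩ = 0` for `deg f < n`.
-/

def LinearMap.BilinForm.IsOrthonormal {K M ι : Type*} [CommSemiring K] [AddCommMonoid M]
    [Module K M] [DecidableEq ι] (B : LinearMap.BilinForm K M) (v : ι → M) : Prop :=
  ∀ i j, B (v i) (v j) = if i = j then 1 else 0

theorem LinearMap.BilinForm.isOrthonormal_inv_sqrt_smul {M ι : Type*} [AddCommGroup M]
    [Module ℝ M] [DecidableEq ι] (B : LinearMap.BilinForm ℝ M) {v : ι → M}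
    (horth : ∀ i j, i ≠ j → B (v i) (v j) = 0) (hpos : ∀ i, 0 < B (v i) (v i)) :
    B.IsOrthonormal fun i => (1 / √(B (v i) (v i))) • v i := by
  intro i j
  simp only [map_smul, LinearMap.smul_apply, smul_eq_mul]
  split_ifs with hij
  · subst hij
    have := hpos i
    field_simp
    rw [Real.sq_sqrt this.le]
  · rw [horth i j hij, mul_zero, mul_zero]

namespace Polynomial.Sequence

variable {K : Type*} [Field K]

theorem exists_eq_sum_smul (p : Sequence K) {D : ℕ} {f : K[X]} (hf : f.natDegree ≤ D) :
    ∃ a : ℕ → K, f = ∑ k ∈ Finset.range (D + 1), a k • p k := by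
  have hmem : f ∈ Submodule.span K (p '' ↑(Finset.range (D + 1))) := by
    rw [Finset.coe_range, p.span_degreeLT fun i _ => (leadingCoeff_ne_zero.2 (p.ne_zero i)).isUnit,
      mem_degreeLT]
    exact (degree_le_natDegree.trans (WithBot.coe_le_coe.2 hf)).trans_lt
      (WithBot.coe_lt_coe.2 D.lt_succ_self)
  obtain ⟨a, ha⟩ := (Submodule.mem_span_image_finset_iff_exists_fun' K).1 hmem
  exact ⟨a, ha.symm⟩

variable {p : Sequence K} {B : LinearMap.BilinForm K K[X]}

theorem eq_sum_bilin_smul (hB : B.IsOrthonormal p) {D : ℕ} {f : K[X]} (hf : f.natDegree ≤ D) :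
    f = ∑ k ∈ Finset.range (D + 1), B f (p k) • p k := by
  obtain ⟨a, rfl⟩ := p.exists_eq_sum_smul hf
  refine Finset.sum_congr rfl fun k hk => ?_
  simp [map_sum, hB _ _, Finset.sum_ite_eq', hk]

theorem bilin_eq_sum (hB : B.IsOrthonormal p) {D : ℕ} {f : K[X]} (hf : f.natDegree ≤ D)
    (g : K[X]) : B f g = ∑ k ∈ Finset.range (D + 1), B f (p k) * B (p k) g := by
  conv_lhs => rw [eq_sum_bilin_smul hB hf]
  simp [map_sum]

theorem bilin_eq_zero_of_natDegree_lt (hB : B.IsOrthonormal p) {n : ℕ} {f : K[X]}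
    (hf : f.natDegree < n) : B f (p n) = 0 := by
  rw [bilin_eq_sum hB le_rfl]
  refine Finset.sum_eq_zero fun k hk => ?_
  rw [hB, if_neg (by grind), mul_zero]

theorem tsum_bilin_mul_bilin [TopologicalSpace K] (hB : B.IsOrthonormal p) (f g : K[X]) :
    ∑' k, B f (p k) * B (p k) g = B f g := by
  rw [bilin_eq_sum hB le_rfl g]
  refine tsum_eq_sum fun k hk => ?_
  rw [bilin_eq_zero_of_natDegree_lt hB (by grind), zero_mul]

end Polynomial.Sequence

section Forms

variable {μ : Measure ℝ}

theorem integrable_eval (hmom : ∀ n : ℕ, Integrable (fun x : ℝ => x ^ n) μ) (q : ℝ[X]) :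
    Integrable (fun x => q.eval x) μ := by
  simp_rw [eval_eq_sum_range]
  exact integrable_finsetSum _ fun i _ => (hmom i).const_mul _

variable (hmom : ∀ n : ℕ, Integrable (fun x : ℝ => x ^ n) μ)

noncomputable def momentFunctional : ℝ[X] →ₗ[ℝ] ℝ where
  toFun q := ∫ x, q.eval x ∂μ
  map_add' p q := by
    simp only [eval_add, integral_add (integrable_eval hmom p) (integrable_eval hmom q)]
  map_smul' a p := by simp [integral_const_mul]

noncomputable def christoffelForm (c : ℝ) : LinearMap.BilinForm ℝ ℝ[X] :=
  (LinearMap.mul ℝ ℝ[X]).compr₂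
    ((momentFunctional hmom).comp (LinearMap.mulRight ℝ ((X - C c) ^ 2)))

noncomputable def sobolevForm (c M N : ℝ) : LinearMap.BilinForm ℝ ℝ[X] :=
  (LinearMap.mul ℝ ℝ[X]).compr₂ (momentFunctional hmom + M • leval c)
    + N • ((LinearMap.mul ℝ ℝ[X]).compl₁₂ derivative derivative).compr₂ (leval c)

theorem christoffelForm_apply (c : ℝ) (f g : ℝ[X]) :
    christoffelForm hmom c f g = ∫ x, f.eval x * g.eval x * (x - c) ^ 2 ∂μ := by
  simp [christoffelForm, momentFunctional]

theorem sobolevForm_apply (c M N : ℝ) (f g : ℝ[X]) :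
    sobolevForm hmom c M N f g = ipS μ c M N f g := by
  simp [sobolevForm, momentFunctional, ipS]

variable {hmom} {c M N : ℝ}

theorem christoffelForm_comm (f g : ℝ[X]) :
    christoffelForm hmom c f g = christoffelForm hmom c g f := by
  simp only [christoffelForm_apply, mul_comm (f.eval _)]

theorem christoffelForm_mul_left (h f g : ℝ[X]) :
    christoffelForm hmom c (h * f) g = christoffelForm hmom c f (h * g) := by
  simp only [christoffelForm_apply, eval_mul]
  congr 1 with x
  ring

theorem sobolevForm_comm (f g : ℝ[X]) :
    sobolevForm hmom c M N f g = sobolevForm hmom c M N g f := by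
  simp only [sobolevForm_apply, ipS, mul_comm (f.eval _), mul_comm ((derivative f).eval c)]

theorem eval_X_sub_C_sq_mul (f : ℝ[X]) : ((X - C c) ^ 2 * f).eval c = 0 := by simp

theorem eval_derivative_X_sub_C_sq_mul (f : ℝ[X]) :
    (derivative ((X - C c) ^ 2 * f)).eval c = 0 := by
  simp [derivative_mul, derivative_pow]

theorem sobolevForm_sq_mul_right (f g : ℝ[X]) :
    sobolevForm hmom c M N f ((X - C c) ^ 2 * g) = christoffelForm hmom c f g := by
  rw [sobolevForm_apply, ipS, eval_X_sub_C_sq_mul, eval_derivative_X_sub_C_sq_mul,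
    christoffelForm_apply]
  simp only [mul_zero, add_zero, eval_mul, eval_pow, eval_sub, eval_X, eval_C]
  congr 1 with x
  ring

theorem sobolevForm_sq_mul_left (f g : ℝ[X]) :
    sobolevForm hmom c M N ((X - C c) ^ 2 * f) g =
      sobolevForm hmom c M N f ((X - C c) ^ 2 * g) := by
  rw [sobolevForm_comm, sobolevForm_sq_mul_right, sobolevForm_sq_mul_right, christoffelForm_comm]

theorem christoffelForm_self_pos (hpos : ∀ q : ℝ[X], q ≠ 0 → 0 < ∫ x, q.eval x ^ 2 ∂μ)
    {q : ℝ[X]} (hq : q ≠ 0) : 0 < christoffelForm hmom c q q := by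
  convert hpos _ (mul_ne_zero hq (X_sub_C_ne_zero c)) using 1
  simp only [christoffelForm_apply, eval_mul, eval_sub, eval_X, eval_C]
  congr 1 with x
  ring

theorem sobolevForm_self_pos (hpos : ∀ q : ℝ[X], q ≠ 0 → 0 < ∫ x, q.eval x ^ 2 ∂μ)
    (hM : 0 ≤ M) (hN : 0 ≤ N) {q : ℝ[X]} (hq : q ≠ 0) : 0 < sobolevForm hmom c M N q q := by
  have hint : ∫ x, q.eval x * q.eval x ∂μ = ∫ x, q.eval x ^ 2 ∂μ := by simp only [sq]
  rw [sobolevForm_apply, ipS, hint]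
  have := hpos q hq
  have := mul_nonneg hM (mul_self_nonneg (q.eval c))
  have := mul_nonneg hN (mul_self_nonneg ((derivative q).eval c))
  linarith

end Forms

section Orthonormal

variable {μ : Measure ℝ} {c M N : ℝ}

theorem onP2_eq_smul (hmom : ∀ n : ℕ, Integrable (fun x : ℝ => x ^ n) μ)
    (P2 : ℕ → ℝ[X]) (n : ℕ) :
    onP2 μ c P2 n = (1 / √(christoffelForm hmom c (P2 n) (P2 n))) • P2 n := by
  have hnorm : nrmSq2 μ c (P2 n) = christoffelForm hmom c (P2 n) (P2 n) := by
    simp only [nrmSq2, christoffelForm_apply, sq]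
  rw [onP2, r2C, hnorm, smul_eq_C_mul]

theorem sN_eq_smul (hmom : ∀ n : ℕ, Integrable (fun x : ℝ => x ^ n) μ)
    (S : ℕ → ℝ[X]) (n : ℕ) :
    sN μ c M N S n = (1 / √(sobolevForm hmom c M N (S n) (S n))) • S n := by
  rw [sN, tC, sobolevForm_apply, smul_eq_C_mul]

theorem degree_onP2 (hmom : ∀ n : ℕ, Integrable (fun x : ℝ => x ^ n) μ)
    (hpos : ∀ q : ℝ[X], q ≠ 0 → 0 < ∫ x, q.eval x ^ 2 ∂μ)
    {P2 : ℕ → ℝ[X]} {n : ℕ} (hn : P2 n ≠ 0) :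
    (onP2 μ c P2 n).degree = (P2 n).degree := by
  rw [onP2_eq_smul hmom, smul_eq_C_mul, degree_C_mul]
  have := christoffelForm_self_pos (hmom := hmom) (c := c) hpos hn
  positivity

theorem degree_sN (hmom : ∀ n : ℕ, Integrable (fun x : ℝ => x ^ n) μ)
    (hpos : ∀ q : ℝ[X], q ≠ 0 → 0 < ∫ x, q.eval x ^ 2 ∂μ) (hM : 0 ≤ M) (hN : 0 ≤ N)
    {S : ℕ → ℝ[X]} {n : ℕ} (hn : S n ≠ 0) :
    (sN μ c M N S n).degree = (S n).degree := by
  rw [sN_eq_smul hmom, smul_eq_C_mul, degree_C_mul]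
  have := sobolevForm_self_pos (hmom := hmom) (c := c) hpos hM hN hn
  positivity

theorem isOrthonormal_onP2 (hmom : ∀ n : ℕ, Integrable (fun x : ℝ => x ^ n) μ)
    (hpos : ∀ q : ℝ[X], q ≠ 0 → 0 < ∫ x, q.eval x ^ 2 ∂μ)
    {P2 : ℕ → ℝ[X]} (hP2 : ∀ n, P2 n ≠ 0)
    (hP2o : ∀ m n, m ≠ n → ∫ x, (P2 m).eval x * (P2 n).eval x * (x - c) ^ 2 ∂μ = 0) :
    (christoffelForm hmom c).IsOrthonormal (onP2 μ c P2) := by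
  simp only [funext (onP2_eq_smul hmom P2)]
  exact LinearMap.BilinForm.isOrthonormal_inv_sqrt_smul _
    (fun i j hij => (christoffelForm_apply hmom c _ _).trans (hP2o i j hij))
    (fun i => christoffelForm_self_pos hpos (hP2 i))

theorem isOrthonormal_sN (hmom : ∀ n : ℕ, Integrable (fun x : ℝ => x ^ n) μ)
    (hpos : ∀ q : ℝ[X], q ≠ 0 → 0 < ∫ x, q.eval x ^ 2 ∂μ) (hM : 0 ≤ M) (hN : 0 ≤ N)
    {S : ℕ → ℝ[X]} (hS : ∀ n, S n ≠ 0)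
    (hSo : ∀ m n, m ≠ n → ipS μ c M N (S m) (S n) = 0) :
    (sobolevForm hmom c M N).IsOrthonormal (sN μ c M N S) := by
  simp only [funext (sN_eq_smul hmom S)]
  exact LinearMap.BilinForm.isOrthonormal_inv_sqrt_smul _
    (fun i j hij => (sobolevForm_apply hmom c M N _ _).trans (hSo i j hij))
    (fun i => sobolevForm_self_pos hpos hM hN (hS i))

end Orthonormal

section Matrices

open Polynomial.Sequence

variable {μ : Measure ℝ} {hmom : ∀ n : ℕ, Integrable (fun x : ℝ => x ^ n) μ} {c M N : ℝ}
  {p s : Sequence ℝ}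

theorem natDegree_X_sub_C_pow_mul_le (k : ℕ) (f : ℝ[X]) :
    ((X - C c) ^ k * f).natDegree ≤ f.natDegree + k := by
  rw [add_comm]
  exact natDegree_mul_le_of_le (by compute_degree) le_rfl

theorem christoffelForm_X_mul_eq_zero
    (hp : (christoffelForm hmom c).IsOrthonormal p) {k j : ℕ}
    (hkj : k + 1 < j ∨ j + 1 < k) : christoffelForm hmom c (X * p k) (p j) = 0 := by
  have hX (k : ℕ) : (X * p k).natDegree ≤ k + 1 := by
    rw [add_comm]
    exact natDegree_mul_le_of_le natDegree_X_le (p.natDegree_eq k).le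
  rcases hkj with hkj | hjk
  · exact bilin_eq_zero_of_natDegree_lt hp ((hX k).trans_lt hkj)
  · rw [christoffelForm_mul_left, christoffelForm_comm]
    exact bilin_eq_zero_of_natDegree_lt hp ((hX j).trans_lt hjk)

theorem sobolevForm_sq_mul_eq_zero
    (hs : (sobolevForm hmom c M N).IsOrthonormal s) {n m : ℕ}
    (hnm : n + 2 < m ∨ m + 2 < n) : sobolevForm hmom c M N ((X - C c) ^ 2 * s n) (s m) = 0 := by
  have hdeg (n : ℕ) : ((X - C c) ^ 2 * s n).natDegree ≤ n + 2 := by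
    simpa using natDegree_X_sub_C_pow_mul_le (c := c) 2 (s n)
  rcases hnm with hnm | hmn
  · exact bilin_eq_zero_of_natDegree_lt hs ((hdeg n).trans_lt hnm)
  · rw [sobolevForm_sq_mul_left, sobolevForm_comm]
    exact bilin_eq_zero_of_natDegree_lt hs ((hdeg m).trans_lt hmn)

theorem christoffelForm_connection_eq_zero
    (hp : (christoffelForm hmom c).IsOrthonormal p)
    (hs : (sobolevForm hmom c M N).IsOrthonormal s) {n m : ℕ}
    (hnm : n < m ∨ m + 2 < n) : christoffelForm hmom c (s n) (p m) = 0 := by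
  rcases hnm with hnm | hmn
  · exact bilin_eq_zero_of_natDegree_lt hp ((s.natDegree_eq n).trans_lt hnm)
  · rw [← sobolevForm_sq_mul_right (M := M) (N := N), sobolevForm_comm]
    refine bilin_eq_zero_of_natDegree_lt hs ((natDegree_X_sub_C_pow_mul_le 2 (p m)).trans_lt ?_)
    simpa using hmn

theorem tsum_christoffelForm_mul_eq_tsum_sobolevForm_mul
    (hp : (christoffelForm hmom c).IsOrthonormal p)
    (hs : (sobolevForm hmom c M N).IsOrthonormal s) (n m : ℕ) :
    ∑' k, christoffelForm hmom c (s n) (p k) *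
        ∑' j, christoffelForm hmom c ((X - C c) * p k) (p j) *
          christoffelForm hmom c ((X - C c) * p j) (p m) =
      ∑' k, sobolevForm hmom c M N ((X - C c) ^ 2 * s n) (s k) *
        christoffelForm hmom c (s k) (p m) := by
  calc _ = ∑' k, christoffelForm hmom c (s n) (p k) *
          christoffelForm hmom c (p k) ((X - C c) ^ 2 * p m) := by
        congr! 2 with k
        simp only [christoffelForm_mul_left (X - C c) _ (p m), tsum_bilin_mul_bilin hp]
        rw [christoffelForm_mul_left, ← mul_assoc, ← sq]
    _ = christoffelForm hmom c (s n) ((X - C c) ^ 2 * p m) := tsum_bilin_mul_bilin hp _ _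
    _ = sobolevForm hmom c M N ((X - C c) ^ 2 * s n) ((X - C c) ^ 2 * p m) := by
        rw [sobolevForm_sq_mul_right, christoffelForm_mul_left]
    _ = _ := by
        simp only [← sobolevForm_sq_mul_right (M := M) (N := N) (s _), tsum_bilin_mul_bilin hs]

end Matrices

theorem stmt13_general
    (μ : Measure ℝ)
    (hmom : ∀ n : ℕ, Integrable (fun x : ℝ => x ^ n) μ)
    (hpos : ∀ q : Polynomial ℝ, q ≠ 0 → 0 < ∫ x, q.eval x ^ 2 ∂μ)
    (c : ℝ)
    (P2 : ℕ → Polynomial ℝ) (hP2m : ∀ n, (P2 n).Monic) (hP2d : ∀ n, (P2 n).natDegree = n)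
    (hP2o : ∀ m n, m ≠ n → ∫ x, (P2 m).eval x * (P2 n).eval x * (x - c) ^ 2 ∂μ = 0)
    (M N : ℝ) (hM : 0 ≤ M) (hN : 0 ≤ N)
    (S : ℕ → Polynomial ℝ) (hSm : ∀ n, (S n).Monic) (hSd : ∀ n, (S n).natDegree = n)
    (hSo : ∀ m n, m ≠ n → ipS μ c M N (S m) (S n) = 0) :
    (∀ k j : ℕ, k + 1 < j ∨ j + 1 < k → J2mat μ c P2 k j = 0)
    ∧ (∀ n m : ℕ, n + 2 < m ∨ m + 2 < n → Hmat μ c M N S n m = 0)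
    ∧ (∀ n m : ℕ, n < m ∨ m + 2 < n → Tmat μ c M N S P2 n m = 0)
    ∧ (∀ n m : ℕ,
        ∑' k : ℕ, Tmat μ c M N S P2 n k
            * (∑' j : ℕ, (J2mat μ c P2 k j - c * kdel k j)
                * (J2mat μ c P2 j m - c * kdel j m))
          = ∑' k : ℕ, Hmat μ c M N S n k * Tmat μ c M N S P2 k m) := by
  let p : Sequence ℝ := ⟨onP2 μ c P2, fun n => by
    rw [degree_onP2 hmom hpos (hP2m n).ne_zero, degree_eq_natDegree (hP2m n).ne_zero, hP2d]⟩
  let s : Sequence ℝ := ⟨sN μ c M N S, fun n => by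
    rw [degree_sN hmom hpos hM hN (hSm n).ne_zero, degree_eq_natDegree (hSm n).ne_zero, hSd]⟩
  have hp : (christoffelForm hmom c).IsOrthonormal p :=
    isOrthonormal_onP2 hmom hpos (fun n => (hP2m n).ne_zero) hP2o
  have hs : (sobolevForm hmom c M N).IsOrthonormal s :=
    isOrthonormal_sN hmom hpos hM hN (fun n => (hSm n).ne_zero) hSo
  have hJ (k j : ℕ) : J2mat μ c P2 k j = christoffelForm hmom c (X * p k) (p j) := by
    simp only [J2mat, christoffelForm_apply, eval_mul, eval_X, mul_assoc]
    rfl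
  have hJc (k j : ℕ) :
      J2mat μ c P2 k j - c * kdel k j = christoffelForm hmom c ((X - C c) * p k) (p j) := by
    rw [hJ, kdel, ← hp k j, sub_mul, map_sub, C_mul', map_smul, LinearMap.sub_apply,
      LinearMap.smul_apply, smul_eq_mul]
  have hT (n m : ℕ) : Tmat μ c M N S P2 n m = christoffelForm hmom c (s n) (p m) :=
    (christoffelForm_apply hmom c _ _).symm
  have hH (n m : ℕ) : Hmat μ c M N S n m = sobolevForm hmom c M N ((X - C c) ^ 2 * s n) (s m) :=
    (sobolevForm_apply hmom c M N _ _).symm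
  simp only [hJc]
  simp only [hJ, hT, hH]
  exact ⟨fun k j => christoffelForm_X_mul_eq_zero hp, fun n m => sobolevForm_sq_mul_eq_zero hs,
    fun n m => christoffelForm_connection_eq_zero hp hs,
    tsum_christoffelForm_mul_eq_tsum_sobolevForm_mul hp hs⟩

/-- `T·(J_{[2]} - cI)² = H·T` entrywise, where `J_{[2]}` is tridiagonal,
`H` is five-diagonal and `T` is lower triangular with bandwidth 2 (so that all the
series below have only finitely many nonzero terms). -/
theorem stmt13
    (μ : Measure ℝ) [IsFiniteMeasure μ]
    (hmom : ∀ n : ℕ, Integrable (fun x : ℝ => x ^ n) μ)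
    (hpos : ∀ q : Polynomial ℝ, q ≠ 0 → 0 < ∫ x, q.eval x ^ 2 ∂μ)
    (c : ℝ) (hc : ∀ᵐ x ∂μ, c < x)
    (P2 : ℕ → Polynomial ℝ) (hP2m : ∀ n, (P2 n).Monic) (hP2d : ∀ n, (P2 n).natDegree = n)
    (hP2o : ∀ m n, m ≠ n → ∫ x, (P2 m).eval x * (P2 n).eval x * (x - c) ^ 2 ∂μ = 0)
    (M N : ℝ) (hM : 0 ≤ M) (hN : 0 ≤ N)
    (S : ℕ → Polynomial ℝ) (hSm : ∀ n, (S n).Monic) (hSd : ∀ n, (S n).natDegree = n)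
    (hSo : ∀ m n, m ≠ n → ipS μ c M N (S m) (S n) = 0) :
    (∀ k j : ℕ, k + 1 < j ∨ j + 1 < k → J2mat μ c P2 k j = 0)
    ∧ (∀ n m : ℕ, n + 2 < m ∨ m + 2 < n → Hmat μ c M N S n m = 0)
    ∧ (∀ n m : ℕ, n < m ∨ m + 2 < n → Tmat μ c M N S P2 n m = 0)
    ∧ (∀ n m : ℕ,
        ∑' k : ℕ, Tmat μ c M N S P2 n k
            * (∑' j : ℕ, (J2mat μ c P2 k j - c * kdel k j)
                * (J2mat μ c P2 j m - c * kdel j m))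
          = ∑' k : ℕ, Hmat μ c M N S n k * Tmat μ c M N S P2 k m) :=
  stmt13_general μ hmom hpos c P2 hP2m hP2d hP2o M N hM hN S hSm hSd hSo
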